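/- Every primary pseudoperfect number K gives a solution to the Erdős–Moser congruence 1ⁿ + 2ⁿ + ⋯ + Kⁿ ≡ (K+1)ⁿ (mod K), where n := lcm{p − 1 : p prime, p ∣ K}. -/

import Mathlib

def IsPPN (K : ℕ) : Prop :=
  1 < K ∧ (1 : ℚ) / K + ∑ p ∈ K.primeFactors, (1 : ℚ) / p = 1

/-! Multiplying the defining identity by `K` gives `1 + ∑_{q ∣ K} K/q = K`; modulo a prime
`p ∣ K` every term with `q ≠ p` vanishes, so `K/p ≡ -1 (mod p)`, and in particular `p² ∤ K`.
Since `p - 1 ∣ n`, the power sum `∑_{x ∈ 𝔽_p} xⁿ` is `-1`, and `∑_{i=1}^K iⁿ` runs `K/p` times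
through all residues mod `p`, so it is `≡ (K/p)·(-1) ≡ 1 ≡ (K+1)ⁿ (mod p)`. As `K` is
squarefree, these congruences combine to one modulo `K`. -/

open Finset

theorem FiniteField.sum_pow_of_card_sub_one_dvd {F : Type*} [Field F] [Fintype F] {i : ℕ}
    (hi : i ≠ 0) (h : Fintype.card F - 1 ∣ i) : ∑ x : F, x ^ i = -1 := by
  classical
  rw [show (-1 : F) = if Fintype.card F - 1 ∣ i then -1 else 0 from (if_pos h).symm,
    ← FiniteField.sum_pow_units F i]
  symm
  refine sum_bij_ne_zero (fun (x : Fˣ) _ _ => (x : F)) (fun _ _ _ => mem_univ _)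
    (fun _ _ _ _ _ _ h => Units.val_injective h) (fun y _ hy => ?_) (fun _ _ _ => rfl)
  exact ⟨Units.mk0 y fun h0 => hy (by rw [h0, zero_pow hi]), mem_univ _, by simpa using hy, rfl⟩

theorem ZMod.sum_range_natCast_of_dvd {M : Type*} [AddCommMonoid M] {p N : ℕ} [NeZero p]
    (h : p ∣ N) (f : ZMod p → M) : ∑ i ∈ range N, f i = (N / p) • ∑ x, f x := by
  obtain ⟨m, rfl⟩ := h
  rw [Nat.mul_div_cancel_left m (NeZero.pos p)]
  induction m with
  | zero => simp
  | succ m ih =>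
    have hperiod : ∑ i ∈ range p, f ↑(p * m + i) = ∑ x, f x := by
      simp only [Nat.cast_add, Nat.cast_mul, ZMod.natCast_self, zero_mul, zero_add]
      exact sum_nbij' (fun i => (i : ZMod p)) ZMod.val (fun _ _ => mem_univ _)
        (fun x _ => mem_range.mpr x.val_lt) (fun i hi => ZMod.val_cast_of_lt (mem_range.mp hi))
        (fun x _ => ZMod.natCast_zmod_val x) (fun _ _ => rfl)
    rw [Nat.mul_succ, sum_range_add, ih, hperiod, succ_nsmul]

theorem Finset.sum_Icc_one_eq_sum_range {M : Type*} [AddCommMonoid M] (f : ℕ → M) {N : ℕ}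
    (h : f N = f 0) : ∑ i ∈ Icc 1 N, f i = ∑ i ∈ range N, f i := by
  cases N with
  | zero => simp
  | succ N =>
    rw [sum_Icc_succ_top (by omega), h, sum_range_succ', range_eq_Ico, sum_Ico_add',
      Ico_add_one_right_eq_Icc, zero_add]

theorem Nat.modEq_of_forall_primeFactors_modEq {K a b : ℕ} (hK : Squarefree K)
    (h : ∀ p ∈ K.primeFactors, a ≡ b [MOD p]) : a ≡ b [MOD K] := by
  simp only [Nat.modEq_iff_dvd, Int.natCast_dvd] at h ⊢
  rw [← Nat.prod_primeFactors_of_squarefree hK]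
  exact prod_primes_dvd _ (fun p hp => (Nat.prime_of_mem_primeFactors hp).prime) h

theorem Nat.dvd_div_of_mem_primeFactors {K p q : ℕ} (hp : p ∈ K.primeFactors)
    (hq : q ∈ K.primeFactors) (hpq : p ≠ q) : p ∣ K / q :=
  Nat.dvd_div_of_mul_dvd <| Nat.Coprime.mul_dvd_of_dvd_of_dvd
    ((Nat.coprime_primes (Nat.prime_of_mem_primeFactors hq)
      (Nat.prime_of_mem_primeFactors hp)).mpr hpq.symm)
    (Nat.dvd_of_mem_primeFactors hq) (Nat.dvd_of_mem_primeFactors hp)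

namespace IsPPN

theorem one_add_sum_div_eq {K : ℕ} (hK : IsPPN K) : 1 + ∑ p ∈ K.primeFactors, K / p = K := by
  have hK0 : (K : ℚ) ≠ 0 := by have := hK.1; positivity
  have key := congrArg ((K : ℚ) * ·) hK.2
  simp only [mul_add, mul_one_div_cancel hK0, mul_sum, mul_one] at key
  have hterm : ∀ p ∈ K.primeFactors, (K : ℚ) * (1 / p) = ((K / p : ℕ) : ℚ) := fun p hp => by
    rw [Nat.cast_div (Nat.dvd_of_mem_primeFactors hp)
      (by exact_mod_cast (Nat.prime_of_mem_primeFactors hp).ne_zero), mul_one_div]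
  rw [sum_congr rfl hterm] at key
  exact_mod_cast key

theorem natCast_div_eq_neg_one {K : ℕ} (hK : IsPPN K) {p : ℕ} (hp : p ∈ K.primeFactors) :
    ((K / p : ℕ) : ZMod p) = -1 := by
  have key := congrArg (Nat.cast : ℕ → ZMod p) hK.one_add_sum_div_eq
  rw [(ZMod.natCast_eq_zero_iff K p).mpr (Nat.dvd_of_mem_primeFactors hp), Nat.cast_add,
    Nat.cast_sum, sum_eq_single_of_mem p hp fun q hq hqp =>
      (ZMod.natCast_eq_zero_iff _ p).mpr (Nat.dvd_div_of_mem_primeFactors hp hq hqp.symm)] at key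
  linear_combination key

theorem squarefree {K : ℕ} (hK : IsPPN K) : Squarefree K := by
  rw [Nat.squarefree_iff_prime_squarefree]
  intro p hp hpp
  have hmem : p ∈ K.primeFactors :=
    Nat.mem_primeFactors.mpr ⟨hp, dvd_of_mul_right_dvd hpp, by have := hK.1; omega⟩
  have := Fact.mk hp
  have hcast := hK.natCast_div_eq_neg_one hmem
  rw [(ZMod.natCast_eq_zero_iff _ p).mpr (Nat.dvd_div_of_mul_dvd hpp)] at hcast
  exact one_ne_zero (neg_eq_zero.mp hcast.symm)

theorem sum_Icc_pow_modEq_one {K : ℕ} (hK : IsPPN K) {p n : ℕ} (hp : p ∈ K.primeFactors)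
    (hn : n ≠ 0) (hpn : p - 1 ∣ n) : ∑ i ∈ Icc 1 K, i ^ n ≡ 1 [MOD p] := by
  have := Fact.mk (Nat.prime_of_mem_primeFactors hp)
  have hpK := Nat.dvd_of_mem_primeFactors hp
  rw [← ZMod.natCast_eq_natCast_iff, Nat.cast_sum, Nat.cast_one]
  calc ∑ i ∈ Icc 1 K, ((i ^ n : ℕ) : ZMod p)
      = ∑ i ∈ range K, (i : ZMod p) ^ n := by
        push_cast
        refine sum_Icc_one_eq_sum_range (fun i => (i : ZMod p) ^ n) ?_
        simp [(ZMod.natCast_eq_zero_iff K p).mpr hpK]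
    _ = ((K / p : ℕ) : ZMod p) * ∑ x : ZMod p, x ^ n := by
        rw [ZMod.sum_range_natCast_of_dvd hpK (· ^ n), nsmul_eq_mul]
    _ = 1 := by
        rw [FiniteField.sum_pow_of_card_sub_one_dvd hn (by rwa [ZMod.card]),
          hK.natCast_div_eq_neg_one hp, neg_one_mul, neg_neg]

end IsPPN

theorem ppn_erdos_moser_congruence (K : ℕ) (hK : IsPPN K) :
    (∑ i ∈ Finset.Icc 1 K, i ^ (K.primeFactors.lcm (fun p => p - 1))) ≡
      (K + 1) ^ (K.primeFactors.lcm (fun p => p - 1)) [MOD K] := by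
  set n := K.primeFactors.lcm (fun p => p - 1)
  have hn : n ≠ 0 := by
    rw [Ne, Finset.lcm_eq_zero_iff]
    rintro ⟨p, hp, hp1⟩
    have := (Nat.prime_of_mem_primeFactors hp).two_le
    omega
  refine Nat.modEq_of_forall_primeFactors_modEq hK.squarefree fun p hp => ?_
  have hK1 : K + 1 ≡ 1 [MOD p] := by
    simpa using (Nat.modEq_zero_iff_dvd.mpr (Nat.dvd_of_mem_primeFactors hp)).add_right 1
  calc ∑ i ∈ Icc 1 K, i ^ n ≡ 1 [MOD p] := hK.sum_Icc_pow_modEq_one hp hn (Finset.dvd_lcm hp)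
    _ = 1 ^ n := (one_pow n).symm
    _ ≡ (K + 1) ^ n [MOD p] := (hK1.pow n).symm
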